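/- Discrete Gronwall lemma with weakly singular kernel: let T > 0 and C ≥ 0. There exists a constant C' ≥ 0, depending only on C and T, with the following property: for every τ ∈ (0, T], every ρ ≥ 0, and every sequence (e_n)_{n ≥ 0} of nonnegative real numbers with e_0 = 0 satisfying e_n ≤ C·τ·Σ_{k=1}^{n−1} e_k + C·τ·Σ_{k=1}^{n−1} ((n−k)·τ)^{−1/2}·e_k + ρ for all n ≥ 1 with n·τ ≤ T, one has e_n ≤ C'·ρ for all n ≥ 0 with n·τ ≤ T. -/
import Mathlib
set_option maxHeartbeats 1000000
open Finset

lemma sum_reflect_Icc (n : ℕ) (f : ℕ → ℝ) :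
    ∑ k ∈ Icc 1 (n-1), f (n-k) = ∑ k ∈ Icc 1 (n-1), f k := by
  apply Finset.sum_nbij' (fun k => n - k) (fun k => n - k) <;>
    (intro a ha; simp only [Finset.mem_Icc] at *) <;> first | omega | (congr 1; omega)

lemma riemann_sum_bound (τ : ℝ) (hτ : 0 < τ) :
    ∀ m : ℕ, ∑ j ∈ Icc 1 m, τ * (Real.sqrt ((j:ℝ)*τ))⁻¹ ≤ 2 * Real.sqrt ((m:ℝ)*τ) := by
  intro m
  induction m with
  | zero => simp
  | succ m ih =>
    rw [Finset.sum_Icc_succ_top (by omega)]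
    set s := Real.sqrt ((m:ℝ)*τ) with hs
    set t := Real.sqrt (((m+1:ℕ):ℝ)*τ) with ht
    have hs2 : s ^ 2 = (m:ℝ)*τ := Real.sq_sqrt (by positivity)
    have ht2 : t ^ 2 = ((m+1:ℕ):ℝ)*τ := Real.sq_sqrt (by positivity)
    have htpos : 0 < t := Real.sqrt_pos.2 (by positivity)
    have hs0 : 0 ≤ s := Real.sqrt_nonneg _
    have hcast : ((m+1:ℕ):ℝ) = (m:ℝ)+1 := by push_cast; ring
    have key : τ * t⁻¹ ≤ 2*t - 2*s := by
      rw [← div_eq_mul_inv, div_le_iff₀ htpos]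
      nlinarith [sq_nonneg (t - s), Real.sqrt_le_sqrt (show (m:ℝ)*τ ≤ ((m+1:ℕ):ℝ)*τ by nlinarith)]
    linarith

lemma geom_sum_bound (b : ℝ) (hb : 1 < b) :
    ∀ m : ℕ, ∑ i ∈ Icc 1 m, b ^ i ≤ b ^ (m+1) / (b - 1) := by
  intro m
  have hb1 : 0 < b - 1 := by linarith
  induction m with
  | zero => simp; positivity
  | succ m ih =>
    rw [Finset.sum_Icc_succ_top (by omega)]
    have heq : b ^ (m+1) / (b-1) + b^(m+1) = b ^ (m+1+1) / (b-1) := by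
      field_simp; ring
    linarith

lemma singular_sum_bound (τ δ : ℝ) (hτ : 0 < τ) (hδ : 0 < δ) (N : ℕ) :
    ∑ j ∈ Icc 1 N, (if (j:ℝ)*τ ≤ δ then τ * (Real.sqrt ((j:ℝ)*τ))⁻¹ else 0) ≤ 2 * Real.sqrt δ := by
  calc ∑ j ∈ Icc 1 N, (if (j:ℝ)*τ ≤ δ then τ * (Real.sqrt ((j:ℝ)*τ))⁻¹ else 0)
      = ∑ j ∈ (Icc 1 N).filter (fun (j : ℕ) => (j:ℝ)*τ ≤ δ), τ * (Real.sqrt ((j:ℝ)*τ))⁻¹ :=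
        (Finset.sum_filter _ _).symm
    _ ≤ ∑ j ∈ Icc 1 (⌊δ/τ⌋₊), τ * (Real.sqrt ((j:ℝ)*τ))⁻¹ := by
        apply Finset.sum_le_sum_of_subset_of_nonneg
        · intro j hj
          simp only [Finset.mem_filter, Finset.mem_Icc] at hj ⊢
          refine ⟨hj.1.1, Nat.le_floor ?_⟩
          rw [le_div_iff₀ hτ]; exact hj.2
        · intros; positivity
    _ ≤ 2 * Real.sqrt ((⌊δ/τ⌋₊ : ℝ)*τ) := riemann_sum_bound τ hτ _
    _ ≤ 2 * Real.sqrt δ := by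
        gcongr
        calc (⌊δ/τ⌋₊:ℝ)*τ ≤ (δ/τ)*τ := by gcongr; exact Nat.floor_le (by positivity)
          _ = δ := by field_simp

/-- Discrete Gronwall lemma with weakly singular kernel: if a nonnegative sequence with
`e 0 = 0` satisfies `e_n ≤ C·τ·Σ_{k=1}^{n−1} e_k + C·τ·Σ_{k=1}^{n−1} ((n−k)·τ)^{−1/2}·e_k + ρ`
for all `n ≥ 1` with `n·τ ≤ T`, then `e_n ≤ C'·ρ` with `C'` depending only on `C` and `T`. -/
theorem discrete_gronwall_weakly_singular (T C : ℝ) (hT : 0 < T) (hC : 0 ≤ C) :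
    ∃ C' : ℝ, 0 ≤ C' ∧
      ∀ τ : ℝ, τ ∈ Set.Ioc 0 T → ∀ ρ : ℝ, 0 ≤ ρ → ∀ e : ℕ → ℝ,
        (∀ n, 0 ≤ e n) → e 0 = 0 →
        (∀ n : ℕ, 1 ≤ n → (n : ℝ) * τ ≤ T →
          e n ≤ C * τ * ∑ k ∈ Finset.Icc 1 (n - 1), e k +
            C * τ * ∑ k ∈ Finset.Icc 1 (n - 1), (((n : ℝ) - (k : ℝ)) * τ) ^ (-(1 : ℝ) / 2) * e k +
            ρ) →
        ∀ n : ℕ, (n : ℝ) * τ ≤ T → e n ≤ C' * ρ := by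
  set δ : ℝ := min T (1/(8*C+1)^2) with hδdef
  have hδpos : 0 < δ := lt_min hT (by positivity)
  have hsδpos : 0 < Real.sqrt δ := Real.sqrt_pos.2 hδpos
  have hsqδ : Real.sqrt δ ≤ 1/(8*C+1) := by
    calc Real.sqrt δ ≤ Real.sqrt (1/(8*C+1)^2) := Real.sqrt_le_sqrt (min_le_right _ _)
      _ = Real.sqrt ((1/(8*C+1))^2) := by rw [one_div, one_div, inv_pow]
      _ = 1/(8*C+1) := Real.sqrt_sq (by positivity)
  set a : ℝ := 4*(C+1)*(1 + (Real.sqrt δ)⁻¹) with hadef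
  have hapos : 0 < a := by positivity
  have h1 : 4*C ≤ a := by nlinarith [inv_pos.2 hsδpos]
  have h81 : (0:ℝ) < 8*C+1 := by linarith
  have h2 : 2*C*Real.sqrt δ ≤ 1/4 := by
    have hle : 2*C*Real.sqrt δ ≤ 2*C/(8*C+1) := by
      rw [div_eq_mul_one_div]; gcongr
    have : 2*C/(8*C+1) ≤ 1/4 := by rw [div_le_iff₀ h81]; nlinarith
    linarith
  have h3 : 4*C*(Real.sqrt δ)⁻¹ ≤ a := by nlinarith [inv_pos.2 hsδpos]
  refine ⟨4 * Real.exp (a*T), by positivity, ?_⟩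
  rintro τ ⟨hτ0, hτT⟩ ρ hρ e he h0 hrec
  set b : ℝ := 1 + a*τ with hbdef
  have hb1 : 1 < b := by nlinarith [mul_pos hapos hτ0]
  have hb0 : 0 < b := by linarith
  have key : ∀ n : ℕ, (n:ℝ)*τ ≤ T → e n ≤ 4*ρ*b^n := by
    intro n
    induction n using Nat.strong_induction_on with
    | _ n ih =>
      intro hnT
      rcases Nat.eq_zero_or_pos n with hn | hn
      · subst hn; rw [h0]; positivity
      · have hrecn := hrec n hn hnT
        have hek : ∀ k ∈ Icc 1 (n-1), e k ≤ 4*ρ*b^k := by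
          intro k hk
          simp only [Finset.mem_Icc] at hk
          apply ih k (by omega)
          calc (k:ℝ)*τ ≤ (n:ℝ)*τ := by
                gcongr; exact_mod_cast Nat.le_of_lt (by omega)
            _ ≤ T := hnT
        -- first sum
        have hS1 : C * τ * ∑ k ∈ Icc 1 (n-1), e k ≤ ρ * b^n := by
          have hsum : ∑ k ∈ Icc 1 (n-1), e k ≤ 4*ρ*(b^n/(a*τ)) := by
            calc ∑ k ∈ Icc 1 (n-1), e k ≤ ∑ k ∈ Icc 1 (n-1), 4*ρ*b^k :=
                  Finset.sum_le_sum hek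
              _ = 4*ρ*∑ k ∈ Icc 1 (n-1), b^k := by rw [Finset.mul_sum]
              _ ≤ 4*ρ*(b^((n-1)+1)/(b-1)) :=
                  mul_le_mul_of_nonneg_left (geom_sum_bound b hb1 _) (by positivity)
              _ = 4*ρ*(b^n/(a*τ)) := by
                  congr 2
                  · congr 1; omega
                  · rw [hbdef]; ring
          calc C * τ * ∑ k ∈ Icc 1 (n-1), e k ≤ C * τ * (4*ρ*(b^n/(a*τ))) := by
                apply mul_le_mul_of_nonneg_left hsum (by positivity)
            _ = (4*C/a) * (ρ * b^n) := by field_simp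
            _ ≤ 1 * (ρ * b^n) := by
                have : 4*C/a ≤ 1 := by rw [div_le_one hapos]; exact h1
                apply mul_le_mul_of_nonneg_right this (by positivity)
            _ = ρ * b^n := one_mul _
        -- second sum
        have hS2 : C * τ * ∑ k ∈ Icc 1 (n-1), (((n:ℝ) - (k:ℝ))*τ) ^ (-(1:ℝ)/2) * e k
            ≤ 2 * (ρ * b^n) := by
          have step1 : ∑ k ∈ Icc 1 (n-1), (((n:ℝ) - (k:ℝ))*τ) ^ (-(1:ℝ)/2) * e k
              ≤ ∑ k ∈ Icc 1 (n-1), (Real.sqrt (((n-k:ℕ):ℝ)*τ))⁻¹ * (4*ρ*b^(n-(n-k))) := by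
            apply Finset.sum_le_sum
            intro k hk
            simp only [Finset.mem_Icc] at hk
            have hcast : ((n:ℝ) - (k:ℝ)) = ((n-k:ℕ):ℝ) := by
              rw [Nat.cast_sub (by omega)]
            have hpos : 0 < ((n-k:ℕ):ℝ)*τ := by
              have : (1:ℝ) ≤ ((n-k:ℕ):ℝ) := by exact_mod_cast Nat.one_le_iff_ne_zero.2 (by omega)
              nlinarith
            rw [hcast, show (-(1:ℝ)/2) = -(1/2) by ring, Real.rpow_neg hpos.le,
              ← Real.sqrt_eq_rpow]
            have hkk : n - (n-k) = k := by omega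
            rw [hkk]
            exact mul_le_mul_of_nonneg_left (hek k (by simp only [Finset.mem_Icc]; omega))
              (by positivity)
          have step2 : ∑ k ∈ Icc 1 (n-1), (Real.sqrt (((n-k:ℕ):ℝ)*τ))⁻¹ * (4*ρ*b^(n-(n-k)))
              = ∑ j ∈ Icc 1 (n-1), (Real.sqrt ((j:ℝ)*τ))⁻¹ * (4*ρ*b^(n-j)) :=
            sum_reflect_Icc n (fun j => (Real.sqrt ((j:ℝ)*τ))⁻¹ * (4*ρ*b^(n-j)))
          have step3 : ∑ j ∈ Icc 1 (n-1), τ * ((Real.sqrt ((j:ℝ)*τ))⁻¹ * (4*ρ*b^(n-j)))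
              ≤ 4*ρ*(2*Real.sqrt δ * b^n + (Real.sqrt δ)⁻¹ * (b^n/a)) := by
            calc ∑ j ∈ Icc 1 (n-1), τ * ((Real.sqrt ((j:ℝ)*τ))⁻¹ * (4*ρ*b^(n-j)))
                ≤ ∑ j ∈ Icc 1 (n-1),
                    (4*ρ*((if (j:ℝ)*τ ≤ δ then τ * (Real.sqrt ((j:ℝ)*τ))⁻¹ else 0) * b^n)
                      + (Real.sqrt δ)⁻¹ * (4*ρ*(τ * b^(n-j)))) := by
                  apply Finset.sum_le_sum
                  intro j hj
                  simp only [Finset.mem_Icc] at hj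
                  have hjpos : 0 < (j:ℝ)*τ := by
                    have : (1:ℝ) ≤ (j:ℝ) := by exact_mod_cast hj.1
                    nlinarith
                  have hsj : 0 < Real.sqrt ((j:ℝ)*τ) := Real.sqrt_pos.2 hjpos
                  by_cases hc : (j:ℝ)*τ ≤ δ
                  · rw [if_pos hc]
                    have hble : b^(n-j) ≤ b^n := pow_le_pow_right₀ (le_of_lt hb1) (by omega)
                    have hnn : (0:ℝ) ≤ (Real.sqrt δ)⁻¹ * (4*ρ*(τ * b^(n-j))) := by positivity
                    have hm := mul_le_mul_of_nonneg_left hble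
                      (show (0:ℝ) ≤ 4*ρ*(τ*(Real.sqrt ((j:ℝ)*τ))⁻¹) by positivity)
                    nlinarith [hm, hnn]
                  · rw [if_neg hc]
                    have hss : Real.sqrt δ ≤ Real.sqrt ((j:ℝ)*τ) :=
                      Real.sqrt_le_sqrt (by linarith [not_le.1 hc])
                    have hinv : (Real.sqrt ((j:ℝ)*τ))⁻¹ ≤ (Real.sqrt δ)⁻¹ :=
                      inv_anti₀ hsδpos hss
                    have hm := mul_le_mul_of_nonneg_left hinv
                      (show (0:ℝ) ≤ τ*(4*ρ*b^(n-j)) by positivity)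
                    nlinarith [hm]
              _ = 4*ρ*((∑ j ∈ Icc 1 (n-1), (if (j:ℝ)*τ ≤ δ then τ * (Real.sqrt ((j:ℝ)*τ))⁻¹ else 0)) * b^n)
                    + (Real.sqrt δ)⁻¹ * (4*ρ*(τ * ∑ j ∈ Icc 1 (n-1), b^(n-j))) := by
                  rw [Finset.sum_add_distrib]
                  congr 1
                  · rw [Finset.sum_mul, Finset.mul_sum]
                  · rw [Finset.mul_sum, Finset.mul_sum, Finset.mul_sum]
              _ ≤ 4*ρ*((2*Real.sqrt δ) * b^n) + (Real.sqrt δ)⁻¹ * (4*ρ*(τ * (b^n/(a*τ)))) := by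
                  have i1 : (∑ j ∈ Icc 1 (n-1), (if (j:ℝ)*τ ≤ δ then τ * (Real.sqrt ((j:ℝ)*τ))⁻¹ else 0))
                      ≤ 2*Real.sqrt δ := singular_sum_bound τ δ hτ0 hδpos _
                  have i2 : ∑ j ∈ Icc 1 (n-1), b^(n-j) ≤ b^n/(a*τ) := by
                    calc ∑ j ∈ Icc 1 (n-1), b^(n-j) = ∑ j ∈ Icc 1 (n-1), b^j :=
                          sum_reflect_Icc n (fun j => b^j)
                      _ ≤ b^((n-1)+1)/(b-1) := geom_sum_bound b hb1 _
                      _ = b^n/(a*τ) := by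
                          congr 1
                          · congr 1; omega
                          · rw [hbdef]; ring
                  gcongr
              _ = 4*ρ*(2*Real.sqrt δ * b^n + (Real.sqrt δ)⁻¹ * (b^n/a)) := by
                  field_simp
          have hτsum : τ * ∑ k ∈ Icc 1 (n-1), (((n:ℝ) - (k:ℝ))*τ) ^ (-(1:ℝ)/2) * e k
              ≤ 4*ρ*(2*Real.sqrt δ * b^n + (Real.sqrt δ)⁻¹ * (b^n/a)) := by
            have hh := mul_le_mul_of_nonneg_left (step1.trans_eq step2) hτ0.le
            refine hh.trans ?_
            rw [Finset.mul_sum]; exact step3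
          have hC2 : C * (4*ρ*(2*Real.sqrt δ * b^n + (Real.sqrt δ)⁻¹ * (b^n/a))) ≤ 2*(ρ*b^n) := by
            have hbn : (0:ℝ) ≤ b^n := by positivity
            have e1 : C * (4*ρ*(2*Real.sqrt δ * b^n)) ≤ (ρ*b^n) := by
              calc C * (4*ρ*(2*Real.sqrt δ * b^n)) = (4*(2*C*Real.sqrt δ))*(ρ*b^n) := by ring
                _ ≤ (4*(1/4))*(ρ*b^n) := by
                    apply mul_le_mul_of_nonneg_right (by linarith) (by positivity)
                _ = ρ*b^n := by ring
            have e2 : C * (4*ρ*((Real.sqrt δ)⁻¹ * (b^n/a))) ≤ (ρ*b^n) := by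
              calc C * (4*ρ*((Real.sqrt δ)⁻¹ * (b^n/a))) = (4*C*(Real.sqrt δ)⁻¹/a)*(ρ*b^n) := by
                    field_simp
                _ ≤ 1*(ρ*b^n) := by
                    have : 4*C*(Real.sqrt δ)⁻¹/a ≤ 1 := by rw [div_le_one hapos]; exact h3
                    apply mul_le_mul_of_nonneg_right this (by positivity)
                _ = ρ*b^n := one_mul _
            nlinarith [e1, e2]
          calc C * τ * ∑ k ∈ Icc 1 (n-1), (((n:ℝ) - (k:ℝ))*τ) ^ (-(1:ℝ)/2) * e k
              = C * (τ * ∑ k ∈ Icc 1 (n-1), (((n:ℝ) - (k:ℝ))*τ) ^ (-(1:ℝ)/2) * e k) := by ring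
            _ ≤ C * (4*ρ*(2*Real.sqrt δ * b^n + (Real.sqrt δ)⁻¹ * (b^n/a))) :=
                mul_le_mul_of_nonneg_left hτsum hC
            _ ≤ 2*(ρ*b^n) := hC2
        have hρb : ρ ≤ ρ * b^n := by
          have hp : (1:ℝ) ≤ b^n := one_le_pow₀ (le_of_lt hb1)
          nlinarith [hp]
        linarith
  intro n hnT
  have hexp : b ≤ Real.exp (a*τ) := by
    rw [hbdef]; linarith [Real.add_one_le_exp (a*τ)]
  have hbn : b^n ≤ Real.exp (a*T) := by
    calc b^n ≤ (Real.exp (a*τ))^n := pow_le_pow_left₀ hb0.le hexp n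
      _ = Real.exp ((n:ℝ)*(a*τ)) := by rw [← Real.exp_nat_mul]
      _ ≤ Real.exp (a*T) := by
          apply Real.exp_le_exp.2
          calc (n:ℝ)*(a*τ) = a*((n:ℝ)*τ) := by ring
            _ ≤ a*T := mul_le_mul_of_nonneg_left hnT hapos.le
  calc e n ≤ 4*ρ*b^n := key n hnT
    _ ≤ 4*ρ*Real.exp (a*T) := by
        apply mul_le_mul_of_nonneg_left hbn (by positivity)
    _ = 4*Real.exp (a*T)*ρ := by ring
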